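/- arXiv:math-ph/0210013 — 5 statements merged into one kernel-verified Lean document; each statement's English description precedes it below -/
import Mathlib

section
/- For every real z ∈ (0,1), the identity 2·𝔑_h(z) − 𝔓_h(z) − 𝔓_hv(z) = (√3/(2π)) · log(1/(1−z)) holds. -/
open scoped BigOperators

/-- Rising factorial (Pochhammer symbol) `(x)_k = x(x+1)⋯(x+k-1)`. -/
noncomputable def pochR (x : ℝ) (k : ℕ) : ℝ := ∏ i ∈ Finset.range k, (x + i)

/-- The Gauss hypergeometric series `₂F₁(a,b;c;z)`. -/
noncomputable def F21R (a b c z : ℝ) : ℝ :=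
  ∑' k : ℕ, pochR a k * pochR b k / (pochR c k * (Nat.factorial k : ℝ)) * z ^ k

/-- The generalized hypergeometric series `₃F₂(a₁,a₂,a₃;b₁,b₂;z)`. -/
noncomputable def F32R (a₁ a₂ a₃ b₁ b₂ z : ℝ) : ℝ :=
  ∑' k : ℕ, pochR a₁ k * pochR a₂ k * pochR a₃ k /
      (pochR b₁ k * pochR b₂ k * (Nat.factorial k : ℝ)) * z ^ k

/-- Cardy's horizontal crossing function `𝔓_h`. -/
noncomputable def Ph (z : ℝ) : ℝ :=
  3 * Real.Gamma (2/3) / (Real.Gamma (1/3)) ^ 2 * z ^ ((1:ℝ)/3) *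
    F21R (1/3) (2/3) (4/3) z

/-- Watts's horizontal-vertical crossing function `𝔓_hv`. -/
noncomputable def Phv (z : ℝ) : ℝ :=
  Ph z - Real.sqrt 3 / (2 * Real.pi) * z * F32R 1 1 (4/3) 2 (5/3) z

/-- Cardy's cluster-number function `𝔑_h`. -/
noncomputable def Nh (z : ℝ) : ℝ :=
  1/2 - Real.sqrt 3 / (4 * Real.pi) *
    (Real.log (1 - z) + (1 - z) * F32R 1 1 (4/3) 2 (5/3) (1 - z))

/-!
Write `B_z(p, q) = ∫₀^z t^(p-1) (1-t)^(q-1) dt`. Both hypergeometric functions are incomplete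
beta integrals: `z^p ₂F₁(p, 1-q; p+1; z) = p B_z(p, q)` and
`z^p (1-z)^q ₂F₁(1, p+q; p+1; z) = p B_z(p, q)`, as one checks by differentiating, using the
first-order equations satisfied by the series. Hence `𝔓_h = (Γ(2/3)/Γ(1/3)²) B_z(1/3, 1/3)`,
and `G(z) = z ₃F₂(1,1,4/3;2,5/3;z)` has derivative `H = ₂F₁(1,4/3;5/3)` with
`z^(2/3) (1-z)^(2/3) H(z) = (2/3) B_z(2/3, 2/3)`. Since `B_z(p, p) + B_{1-z}(p, p) = B(p, p)`,
both `𝔓_h(z) + 𝔓_h(1-z) = 1` and `H(z) + H(1-z) = (2/3) B(2/3, 2/3) (z(1-z))^(-2/3)`. The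
reflection formula `Γ(1/3) Γ(2/3) = 2π/√3` then makes
`Φ(z) = 1 + (√3/2π)(G(z) - G(1-z)) - 2𝔓_h(z)` have zero derivative on `(0, 1)`; as
`Φ(z) + Φ(1-z) = 0`, `Φ` vanishes, which is the identity after unfolding `𝔑_h` and `𝔓_hv`.
-/

open Real Set Filter Topology MeasureTheory
open scoped Nat

section Pochhammer

lemma pochR_zero (x : ℝ) : pochR x 0 = 1 := Finset.prod_range_zero _

lemma pochR_succ (x : ℝ) (k : ℕ) : pochR x (k + 1) = pochR x k * (x + k) :=
  Finset.prod_range_succ _ _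

lemma pochR_succ' (x : ℝ) (k : ℕ) : pochR x (k + 1) = x * pochR (x + 1) k := by
  rw [pochR, Finset.prod_range_succ', pochR, Nat.cast_zero, add_zero, mul_comm]
  congr 1
  exact Finset.prod_congr rfl fun i _ => by push_cast; ring

lemma pochR_pos {x : ℝ} (hx : 0 < x) (k : ℕ) : 0 < pochR x k :=
  Finset.prod_pos fun _ _ => by positivity

lemma pochR_le_pochR {x y : ℝ} (hx : 0 ≤ x) (hxy : x ≤ y) (k : ℕ) :
    pochR x k ≤ pochR y k :=
  Finset.prod_le_prod (fun _ _ => by positivity) fun _ _ => by linarith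

lemma pochR_one (k : ℕ) : pochR 1 k = k ! := by
  induction k with
  | zero => simp [pochR_zero]
  | succ k ih => rw [pochR_succ, ih, Nat.factorial_succ]; push_cast; ring

lemma pochR_two (k : ℕ) : pochR 2 k = (k + 1)! := by
  induction k with
  | zero => simp [pochR_zero]
  | succ k ih => rw [pochR_succ, ih, Nat.factorial_succ (k + 1)]; push_cast; ring

end Pochhammer

noncomputable def powerSeriesSum (a : ℕ → ℝ) (z : ℝ) : ℝ := ∑' k, a k * z ^ k

section PowerSeries

variable {a : ℕ → ℝ} {C z : ℝ}

lemma powerSeriesSum_zero (a : ℕ → ℝ) : powerSeriesSum a 0 = a 0 := by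
  rw [powerSeriesSum, tsum_eq_single 0 fun k hk => by rw [zero_pow hk, mul_zero], pow_zero, mul_one]

lemma powerSeriesSum_const_mul (c : ℝ) (a : ℕ → ℝ) (z : ℝ) :
    powerSeriesSum (fun k => c * a k) z = c * powerSeriesSum a z := by
  simp only [powerSeriesSum, mul_assoc, tsum_mul_left]

lemma powerSeriesSum_eq_add_mul_shift (h : Summable fun k => a k * z ^ k) :
    powerSeriesSum a z = a 0 + z * powerSeriesSum (fun k => a (k + 1)) z := by
  rw [powerSeriesSum, h.tsum_eq_zero_add, powerSeriesSum, ← tsum_mul_left, pow_zero, mul_one]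
  exact congrArg _ (tsum_congr fun k => by ring)

lemma summable_mul_pow (ha : ∀ k, |a k| ≤ C) (hz : |z| < 1) :
    Summable fun k => a k * z ^ k := by
  refine .of_norm_bounded ((summable_geometric_of_lt_one (abs_nonneg z) hz).mul_left C) fun k => ?_
  rw [norm_mul, norm_pow, Real.norm_eq_abs, Real.norm_eq_abs]
  exact mul_le_mul_of_nonneg_right (ha k) (by positivity)

lemma summable_natCast_mul_mul_pow (ha : ∀ k, |a k| ≤ C) (hz : |z| < 1) :
    Summable fun k : ℕ => (k : ℝ) * a k * z ^ k := by
  have hgeom := (summable_pow_mul_geometric_of_norm_lt_one 1 (by rwa [norm_abs_eq_norm])).mul_left C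
  refine .of_norm_bounded hgeom fun k => ?_
  rw [norm_mul, norm_mul, norm_pow, Real.norm_eq_abs, Real.norm_eq_abs, Real.norm_eq_abs,
    Nat.abs_cast, pow_one]
  calc (k : ℝ) * |a k| * |z| ^ k = |a k| * ((k : ℝ) * |z| ^ k) := by ring
    _ ≤ C * ((k : ℝ) * |z| ^ k) := mul_le_mul_of_nonneg_right (ha k) (by positivity)

lemma summable_add_natCast_mul_mul_pow (ha : ∀ k, |a k| ≤ C) (hz : |z| < 1) (s : ℝ) :
    Summable fun k : ℕ => (s + k) * a k * z ^ k :=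
  (((summable_mul_pow ha hz).mul_left s).add (summable_natCast_mul_mul_pow ha hz)).congr
    fun k => by ring

theorem hasDerivAt_powerSeriesSum (ha : ∀ k, |a k| ≤ C) (hz : |z| < 1) :
    HasDerivAt (powerSeriesSum a)
      (powerSeriesSum (fun k : ℕ => ((k : ℝ) + 1) * a (k + 1)) z) z := by
  obtain ⟨r, hzr, hr1⟩ := exists_between hz
  have hr0 : 0 < r := (abs_nonneg z).trans_lt hzr
  have hbound : ∀ (n : ℕ) (y : ℝ), y ∈ Metric.ball 0 r →
      ‖a n * (n * y ^ (n - 1))‖ ≤ C * (n * r ^ (n - 1)) := fun n y hy => by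
    rw [mem_ball_zero_iff, Real.norm_eq_abs] at hy
    rw [Real.norm_eq_abs, abs_mul, abs_mul, abs_pow, Nat.abs_cast]
    have hC : 0 ≤ C := (abs_nonneg _).trans (ha 0)
    gcongr
    exact ha n
  have hu : Summable fun n : ℕ => C * (n * r ^ (n - 1)) := by
    refine (summable_nat_add_iff 1).mp ?_
    have hlin : Summable fun n : ℕ => (n : ℝ) * r ^ n := by
      simpa using summable_pow_mul_geometric_of_norm_lt_one 1 (by rwa [Real.norm_of_nonneg hr0.le])
    refine ((hlin.add (summable_geometric_of_lt_one hr0.le hr1)).mul_left C).congr fun n => ?_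
    simp only [Nat.add_sub_cancel]; push_cast; ring
  have hD := hasDerivAt_tsum_of_isPreconnected hu Metric.isOpen_ball
    (convex_ball (0 : ℝ) r).isPreconnected (g := fun n y => a n * y ^ n)
    (fun n y _ => (hasDerivAt_pow n y).const_mul (a n)) hbound (Metric.mem_ball_self hr0)
    (summable_mul_pow ha (by norm_num)) (by rwa [mem_ball_zero_iff, Real.norm_eq_abs])
  suffices hsum : ∑' n, a n * (n * z ^ (n - 1)) =
      powerSeriesSum (fun k : ℕ => ((k : ℝ) + 1) * a (k + 1)) z by
    rw [← hsum]; exact hD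
  have hz' : z ∈ Metric.ball 0 r := by rwa [mem_ball_zero_iff, Real.norm_eq_abs]
  rw [(hu.of_norm_bounded (hbound · z hz')).tsum_eq_zero_add]
  simp only [powerSeriesSum, Nat.cast_zero, zero_mul, mul_zero, zero_add, Nat.add_sub_cancel]
  exact tsum_congr fun k => by push_cast; ring

lemma mul_powerSeriesSum_add_mul_deriv (ha : ∀ k, |a k| ≤ C) (hz : |z| < 1) (s : ℝ) :
    s * powerSeriesSum a z + z * powerSeriesSum (fun k : ℕ => ((k : ℝ) + 1) * a (k + 1)) z =
      powerSeriesSum (fun k => (s + k) * a k) z := by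
  have h1 := summable_mul_pow ha hz
  have h2 := summable_natCast_mul_mul_pow ha hz
  have hshift : powerSeriesSum (fun k => (k : ℝ) * a k) z =
      z * powerSeriesSum (fun k : ℕ => ((k : ℝ) + 1) * a (k + 1)) z := by
    rw [powerSeriesSum_eq_add_mul_shift h2]; push_cast; ring
  rw [← hshift, powerSeriesSum, powerSeriesSum, powerSeriesSum, ← tsum_mul_left,
    ← (h1.mul_left s).tsum_add h2]
  exact tsum_congr fun k => by ring

end PowerSeries

noncomputable def binomSeriesCoeff (b : ℝ) (k : ℕ) : ℝ := pochR b k / k !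

noncomputable def hyp2F1Coeff (a b c : ℝ) (k : ℕ) : ℝ :=
  pochR a k * pochR b k / (pochR c k * k !)

noncomputable def hyp3F2Coeff (a₁ a₂ a₃ b₁ b₂ : ℝ) (k : ℕ) : ℝ :=
  pochR a₁ k * pochR a₂ k * pochR a₃ k / (pochR b₁ k * pochR b₂ k * k !)

lemma F21R_eq_powerSeriesSum (a b c : ℝ) : F21R a b c = powerSeriesSum (hyp2F1Coeff a b c) := rfl

lemma F32R_eq_powerSeriesSum (a₁ a₂ a₃ b₁ b₂ : ℝ) :
    F32R a₁ a₂ a₃ b₁ b₂ = powerSeriesSum (hyp3F2Coeff a₁ a₂ a₃ b₁ b₂) := rfl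

section Coefficients

variable {a b c : ℝ}

lemma abs_binomSeriesCoeff_le_one (hb0 : 0 < b) (hb1 : b ≤ 1) (k : ℕ) :
    |binomSeriesCoeff b k| ≤ 1 := by
  have := pochR_pos hb0 k
  have := Nat.factorial_pos k
  rw [binomSeriesCoeff, abs_of_nonneg (by positivity), div_le_one (by positivity), ← pochR_one]
  exact pochR_le_pochR hb0.le hb1 k

lemma binomSeriesCoeff_succ (b : ℝ) (k : ℕ) :
    (k + 1) * binomSeriesCoeff b (k + 1) = (b + k) * binomSeriesCoeff b k := by
  have := Nat.factorial_pos k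
  rw [binomSeriesCoeff, binomSeriesCoeff, pochR_succ, Nat.factorial_succ]
  push_cast
  field_simp

lemma abs_hyp2F1Coeff_le_one (ha0 : 0 < a) (ha1 : a ≤ 1) (hb0 : 0 < b) (hbc : b ≤ c) (k : ℕ) :
    |hyp2F1Coeff a b c k| ≤ 1 := by
  have := pochR_pos ha0 k
  have := pochR_pos hb0 k
  have := pochR_pos (hb0.trans_le hbc) k
  have := Nat.factorial_pos k
  rw [hyp2F1Coeff, abs_of_nonneg (by positivity), div_le_one (by positivity),
    mul_comm _ (k ! : ℝ), ← pochR_one]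
  exact mul_le_mul (pochR_le_pochR ha0.le ha1 k) (pochR_le_pochR hb0.le hbc k) (by positivity)
    (pochR_pos one_pos k).le

lemma hyp2F1Coeff_zero (a b c : ℝ) : hyp2F1Coeff a b c 0 = 1 := by
  simp [hyp2F1Coeff, pochR_zero]

lemma add_mul_hyp2F1Coeff_add_one (ha : 0 < a) (b : ℝ) (k : ℕ) :
    (a + k) * hyp2F1Coeff a b (a + 1) k = a * binomSeriesCoeff b k := by
  have := pochR_pos (by linarith : 0 < a + 1) k
  have := Nat.factorial_pos k
  have hshift : pochR a k * (a + k) = a * pochR (a + 1) k := by rw [← pochR_succ, pochR_succ']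
  rw [hyp2F1Coeff, binomSeriesCoeff]
  field_simp
  linear_combination pochR b k * hshift

lemma hyp2F1Coeff_one_succ (b : ℝ) (hc : 0 < c) (k : ℕ) :
    (c + k) * hyp2F1Coeff 1 b c (k + 1) = (b + k) * hyp2F1Coeff 1 b c k := by
  have := pochR_pos hc k
  have := Nat.factorial_pos k
  have : 0 < c + k := by positivity
  rw [hyp2F1Coeff, hyp2F1Coeff, pochR_one, pochR_one, pochR_succ, pochR_succ, Nat.factorial_succ]
  push_cast
  field_simp

lemma one_add_mul_hyp3F2Coeff (b c : ℝ) (k : ℕ) :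
    (1 + k) * hyp3F2Coeff 1 1 b 2 c k = hyp2F1Coeff 1 b c k := by
  have := Nat.factorial_pos k
  rw [hyp3F2Coeff, hyp2F1Coeff, pochR_one, pochR_two, Nat.factorial_succ]
  push_cast
  rcases eq_or_ne (pochR c k) 0 with hc | hc
  · simp [hc]
  field_simp
  ring

lemma abs_hyp3F2Coeff_le_one (hb0 : 0 < b) (hbc : b ≤ c) (k : ℕ) :
    |hyp3F2Coeff 1 1 b 2 c k| ≤ 1 := by
  have hk : (0 : ℝ) < 1 + k := by positivity
  rw [← mul_le_mul_iff_right₀ hk, ← abs_of_pos hk, ← abs_mul, one_add_mul_hyp3F2Coeff,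
    abs_of_pos hk]
  calc |hyp2F1Coeff 1 b c k| ≤ 1 := abs_hyp2F1Coeff_le_one one_pos le_rfl hb0 hbc k
    _ ≤ (1 + k) * 1 := by linarith [k.cast_nonneg (α := ℝ)]

end Coefficients

lemma eq_of_forall_hasDerivAt_zero {s : Set ℝ} (hs : IsOpen s) (hs' : IsPreconnected s)
    {f : ℝ → ℝ} (hf : ∀ x ∈ s, HasDerivAt f 0 x) {x y : ℝ} (hx : x ∈ s)
    (hy : y ∈ s) :
    f x = f y :=
  hs.is_const_of_deriv_eq_zero hs' (fun u hu => (hf u hu).differentiableAt.differentiableWithinAt)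
    (fun u hu => (hf u hu).deriv) hx hy

noncomputable def betaIntegrand (p q t : ℝ) : ℝ := t ^ (p - 1) * (1 - t) ^ (q - 1)

section Hypergeometric

variable {b p q z : ℝ}

theorem powerSeriesSum_binomSeriesCoeff (hb0 : 0 < b) (hb1 : b ≤ 1) (hz : z ∈ Ioo (-1) 1) :
    powerSeriesSum (binomSeriesCoeff b) z = (1 - z) ^ (-b) := by
  have hβ := abs_binomSeriesCoeff_le_one hb0 hb1
  set g := powerSeriesSum (binomSeriesCoeff b)
  have hderiv : ∀ x ∈ Ioo (-1 : ℝ) 1, HasDerivAt (fun x => (1 - x) ^ b * g x) 0 x := by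
    intro x hx
    have hx1 : 0 < 1 - x := by linarith [hx.2]
    have habs : |x| < 1 := abs_lt.mpr hx
    -- the binomial series solves `(1 - x) g' = b g`
    have hode := mul_powerSeriesSum_add_mul_deriv hβ habs b
    rw [show (fun k : ℕ => (b + k) * binomSeriesCoeff b k) =
      fun k : ℕ => (k + 1) * binomSeriesCoeff b (k + 1) from
        funext fun k => (binomSeriesCoeff_succ b k).symm] at hode
    have hD := (((hasDerivAt_id' x).const_sub 1).rpow_const (p := b) (Or.inl hx1.ne')).mul
      (hasDerivAt_powerSeriesSum hβ habs)
    refine hD.congr_deriv ?_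
    rw [rpow_sub_one hx1.ne']
    field_simp
    linear_combination -(1 - x) ^ b * hode
  have hconst := eq_of_forall_hasDerivAt_zero isOpen_Ioo isPreconnected_Ioo hderiv hz
    (show (0 : ℝ) ∈ Ioo (-1) 1 by norm_num)
  have hg0 : g 0 = 1 := by simp [g, powerSeriesSum_zero, binomSeriesCoeff, pochR_zero]
  rw [sub_zero, one_rpow, hg0, mul_one] at hconst
  rw [rpow_neg (by linarith [hz.2])]
  exact eq_inv_of_mul_eq_one_left (by rwa [mul_comm])

theorem hasDerivAt_rpow_mul_F21R (hp0 : 0 < p) (hp1 : p ≤ 1) (hq0 : 0 ≤ q) (hq1 : q < 1)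
    (hz : z ∈ Ioo 0 1) :
    HasDerivAt (fun x => x ^ p * F21R p (1 - q) (p + 1) x) (p * betaIntegrand p q z) z := by
  have hc := abs_hyp2F1Coeff_le_one hp0 hp1 (b := 1 - q) (c := p + 1) (by linarith) (by linarith)
  have habs : |z| < 1 := abs_lt.mpr ⟨by linarith [hz.1], hz.2⟩
  have hode := mul_powerSeriesSum_add_mul_deriv hc habs p
  simp_rw [add_mul_hyp2F1Coeff_add_one hp0] at hode
  rw [powerSeriesSum_const_mul, powerSeriesSum_binomSeriesCoeff (by linarith) (by linarith)
    ⟨by linarith [hz.1], hz.2⟩] at hode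
  have hD := (hasDerivAt_rpow_const (p := p) (Or.inl hz.1.ne')).mul
    (hasDerivAt_powerSeriesSum hc habs)
  rw [F21R_eq_powerSeriesSum]
  refine hD.congr_deriv ?_
  rw [betaIntegrand, show z ^ p = z ^ (p - 1) * z by rw [← rpow_add_one hz.1.ne', sub_add_cancel],
    show q - 1 = -(1 - q) by ring]
  linear_combination z ^ (p - 1) * hode

theorem hasDerivAt_rpow_mul_one_sub_rpow_mul_F21R (hpq : 0 < p + q) (hq : q ≤ 1)
    (hz : z ∈ Ioo 0 1) :
    HasDerivAt (fun x => x ^ p * (1 - x) ^ q * F21R 1 (p + q) (p + 1) x)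
      (p * betaIntegrand p q z) z := by
  have hc := abs_hyp2F1Coeff_le_one one_pos le_rfl hpq (c := p + 1) (by linarith)
  have habs : |z| < 1 := abs_lt.mpr ⟨by linarith [hz.1], hz.2⟩
  have hz1 : 0 < 1 - z := by linarith [hz.2]
  set H := powerSeriesSum (hyp2F1Coeff 1 (p + q) (p + 1))
  set H' :=
    powerSeriesSum (fun k : ℕ => ((k : ℝ) + 1) * hyp2F1Coeff 1 (p + q) (p + 1) (k + 1)) z
  have hode : p * H z + z * H' = p + z * ((p + q) * H z + z * H') := by
    rw [mul_powerSeriesSum_add_mul_deriv hc habs, mul_powerSeriesSum_add_mul_deriv hc habs,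
      powerSeriesSum_eq_add_mul_shift]
    · simp only [hyp2F1Coeff_zero, Nat.cast_zero, add_zero, mul_one, Nat.cast_add_one]
      congr 3 with k
      rw [← hyp2F1Coeff_one_succ _ (by linarith) k]
      ring
    · exact summable_add_natCast_mul_mul_pow hc habs p
  have hD := ((hasDerivAt_rpow_const (p := p) (Or.inl hz.1.ne')).mul
    (((hasDerivAt_id' z).const_sub 1).rpow_const (p := q) (Or.inl hz1.ne'))).mul
    (hasDerivAt_powerSeriesSum hc habs)
  rw [F21R_eq_powerSeriesSum]
  refine hD.congr_deriv ?_
  simp only [Pi.mul_apply]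
  rw [betaIntegrand, show z ^ p = z ^ (p - 1) * z by rw [← rpow_add_one hz.1.ne', sub_add_cancel],
    show (1 - z) ^ q = (1 - z) ^ (q - 1) * (1 - z) by
      rw [← rpow_add_one hz1.ne', sub_add_cancel]]
  linear_combination z ^ (p - 1) * (1 - z) ^ (q - 1) * hode

theorem hasDerivAt_mul_F32R (hb0 : 0 < b) {c : ℝ} (hbc : b ≤ c) (hz : |z| < 1) :
    HasDerivAt (fun x => x * F32R 1 1 b 2 c x) (F21R 1 b c z) z := by
  have hd := abs_hyp3F2Coeff_le_one hb0 hbc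
  have hD := (hasDerivAt_id' z).mul (hasDerivAt_powerSeriesSum hd hz)
  rw [F32R_eq_powerSeriesSum]
  refine hD.congr_deriv ?_
  rw [mul_powerSeriesSum_add_mul_deriv hd hz, F21R_eq_powerSeriesSum]
  simp_rw [one_add_mul_hyp3F2Coeff]

end Hypergeometric

section Beta

variable {p q : ℝ}

lemma ofReal_betaIntegrand {t : ℝ} (ht : t ∈ Icc (0 : ℝ) 1) :
    ((betaIntegrand p q t : ℝ) : ℂ) =
      (t : ℂ) ^ ((p : ℂ) - 1) * (1 - (t : ℂ)) ^ ((q : ℂ) - 1) := by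
  have ht1 : 0 ≤ 1 - t := by linarith [ht.2]
  rw [betaIntegrand, Complex.ofReal_mul, Complex.ofReal_cpow ht.1, Complex.ofReal_cpow ht1]
  push_cast
  rfl

lemma intervalIntegrable_betaIntegrand (hp : 0 < p) (hq : 0 < q) :
    IntervalIntegrable (betaIntegrand p q) volume 0 1 := by
  have hC := Complex.betaIntegral_convergent (u := p) (v := q) (by simpa) (by simpa)
  rw [intervalIntegrable_iff_integrableOn_Ioc_of_le zero_le_one] at hC ⊢
  refine IntegrableOn.congr_fun (Integrable.re hC) (fun t ht => ?_) measurableSet_Ioc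
  rw [← ofReal_betaIntegrand (Ioc_subset_Icc_self ht)]
  rfl

lemma integral_betaIntegrand (hp : 0 < p) (hq : 0 < q) :
    ∫ t in (0 : ℝ)..1, betaIntegrand p q t = Gamma p * Gamma q / Gamma (p + q) := by
  have key := Complex.Gamma_mul_Gamma_eq_betaIntegral (s := p) (t := q) (by simpa) (by simpa)
  have hB :
      Complex.betaIntegral p q = ((∫ t in (0 : ℝ)..1, betaIntegrand p q t : ℝ) : ℂ) := by
    rw [Complex.betaIntegral, ← intervalIntegral.integral_ofReal]
    refine intervalIntegral.integral_congr fun t ht => ?_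
    rw [uIcc_of_le zero_le_one] at ht
    exact (ofReal_betaIntegrand ht).symm
  rw [hB, ← Complex.ofReal_add, Complex.Gamma_ofReal, Complex.Gamma_ofReal, Complex.Gamma_ofReal,
    ← Complex.ofReal_mul, ← Complex.ofReal_mul, Complex.ofReal_inj] at key
  rw [key, mul_div_cancel_left₀ _ (Gamma_pos_of_pos (by linarith)).ne']

lemma betaIntegrand_one_sub (p q t : ℝ) : betaIntegrand p q (1 - t) = betaIntegrand q p t := by
  rw [betaIntegrand, betaIntegrand, sub_sub_cancel, mul_comm]

theorem add_apply_one_sub_eq_of_hasDerivAt (hp : 0 < p) {F : ℝ → ℝ} {c : ℝ}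
    (hF : ∀ x ∈ Ioo (0 : ℝ) 1, HasDerivAt F (c * betaIntegrand p p x) x)
    (hF0 : Tendsto F (𝓝[>] 0) (𝓝 0)) {z : ℝ} (hz : z ∈ Ioo (0 : ℝ) 1) :
    F z + F (1 - z) = c * (Gamma p ^ 2 / Gamma (2 * p)) := by
  have hint := intervalIntegrable_betaIntegrand hp hp
  have hint' : ∀ {x y}, x ∈ Icc (0 : ℝ) 1 → y ∈ Icc (0 : ℝ) 1 →
      IntervalIntegrable (betaIntegrand p p) volume x y := fun hx hy =>
    hint.mono_set (uIcc_subset_uIcc (by simpa [uIcc_of_le zero_le_one] using hx)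
      (by simpa [uIcc_of_le zero_le_one] using hy))
  have hprim : ∀ x ∈ Ioo (0 : ℝ) 1, F x = c * ∫ t in (0 : ℝ)..x, betaIntegrand p p t := by
    intro x hx
    have h := intervalIntegral.integral_eq_sub_of_hasDerivAt_of_tendsto hx.1
      (fun y hy => hF y ⟨hy.1, hy.2.trans hx.2⟩)
      ((hint' (left_mem_Icc.mpr zero_le_one) (Ioo_subset_Icc_self hx)).const_mul c) hF0
      ((hF x hx).continuousAt.tendsto.mono_left nhdsWithin_le_nhds)
    rw [intervalIntegral.integral_const_mul, sub_zero] at h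
    exact h.symm
  have hz' : 1 - z ∈ Ioo (0 : ℝ) 1 := ⟨by linarith [hz.2], by linarith [hz.1]⟩
  have hsym :
      ∫ t in (0 : ℝ)..(1 - z), betaIntegrand p p t = ∫ t in z..1, betaIntegrand p p t := by
    refine Eq.symm ?_
    simpa [betaIntegrand_one_sub] using
      intervalIntegral.integral_comp_sub_left (betaIntegrand p p) (a := z) (b := 1) 1
  rw [hprim z hz, hprim _ hz', hsym, ← mul_add, intervalIntegral.integral_add_adjacent_intervals
    (hint' (left_mem_Icc.mpr zero_le_one) (Ioo_subset_Icc_self hz))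
    (hint' (Ioo_subset_Icc_self hz) (right_mem_Icc.mpr zero_le_one)),
    integral_betaIntegrand hp hp, sq, two_mul]

end Beta

lemma tendsto_rpow_mul_nhdsGT_zero {p : ℝ} (hp : 0 < p) {g : ℝ → ℝ}
    (hg : ContinuousAt g 0) :
    Tendsto (fun x => x ^ p * g x) (𝓝[>] 0) (𝓝 0) := by
  have h := ((continuousAt_rpow_const 0 p (Or.inr hp.le)).mul hg).tendsto
  simp only [Pi.mul_apply, zero_rpow hp.ne', zero_mul] at h
  exact h.mono_left nhdsWithin_le_nhds

lemma continuousAt_F21R_zero {a b c : ℝ} (ha0 : 0 < a) (ha1 : a ≤ 1) (hb0 : 0 < b)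
    (hbc : b ≤ c) :
    ContinuousAt (F21R a b c) 0 :=
  (hasDerivAt_powerSeriesSum (abs_hyp2F1Coeff_le_one ha0 ha1 hb0 hbc) (by norm_num)).continuousAt

lemma Gamma_one_third_mul_Gamma_two_thirds : Gamma (1 / 3) * Gamma (2 / 3) = 2 * π / √3 := by
  have h := Gamma_mul_Gamma_one_sub (1 / 3)
  rw [show (1 : ℝ) - 1 / 3 = 2 / 3 by norm_num, show π * (1 / 3) = π / 3 by ring,
    sin_pi_div_three] at h
  rw [h]
  field_simp

lemma hasDerivAt_Ph {z : ℝ} (hz : z ∈ Ioo (0 : ℝ) 1) :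
    HasDerivAt Ph (Gamma (2 / 3) / Gamma (1 / 3) ^ 2 * betaIntegrand (1 / 3) (1 / 3) z) z := by
  have h := hasDerivAt_rpow_mul_F21R (p := 1 / 3) (q := 1 / 3) (by norm_num) (by norm_num)
    (by norm_num) (by norm_num) hz
  rw [show (1 : ℝ) - 1 / 3 = 2 / 3 by norm_num, show (1 : ℝ) / 3 + 1 = 4 / 3 by norm_num] at h
  have hPh : Ph = fun x => 3 * Gamma (2 / 3) / Gamma (1 / 3) ^ 2 *
      (x ^ ((1 : ℝ) / 3) * F21R (1 / 3) (2 / 3) (4 / 3) x) :=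
    funext fun x => by rw [Ph, mul_assoc]
  rw [hPh]
  exact (h.const_mul _).congr_deriv (by ring)

lemma Ph_add_Ph_one_sub {z : ℝ} (hz : z ∈ Ioo (0 : ℝ) 1) : Ph z + Ph (1 - z) = 1 := by
  have hPh0 : Tendsto Ph (𝓝[>] 0) (𝓝 0) := by
    have h := (tendsto_rpow_mul_nhdsGT_zero (p := 1 / 3) (by norm_num)
      (continuousAt_F21R_zero (a := 1 / 3) (b := 2 / 3) (c := 4 / 3) (by norm_num) (by norm_num)
        (by norm_num) (by norm_num))).const_mul (3 * Gamma (2 / 3) / Gamma (1 / 3) ^ 2)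
    rw [mul_zero] at h
    exact h.congr fun x => by rw [Ph, mul_assoc]
  have h13 := Gamma_pos_of_pos (by norm_num : (0 : ℝ) < 1 / 3)
  have h23 := Gamma_pos_of_pos (by norm_num : (0 : ℝ) < 2 / 3)
  rw [add_apply_one_sub_eq_of_hasDerivAt (by norm_num) (fun x hx => hasDerivAt_Ph hx) hPh0 hz,
    show 2 * (1 / 3 : ℝ) = 2 / 3 by norm_num]
  field_simp

lemma F21R_add_F21R_one_sub {z : ℝ} (hz : z ∈ Ioo (0 : ℝ) 1) :
    F21R 1 (4 / 3) (5 / 3) z + F21R 1 (4 / 3) (5 / 3) (1 - z) =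
      2 / 3 * (Gamma (2 / 3) ^ 2 / Gamma (4 / 3)) * betaIntegrand (1 / 3) (1 / 3) z := by
  set P := fun x : ℝ => x ^ ((2 : ℝ) / 3) * (1 - x) ^ ((2 : ℝ) / 3) * F21R 1 (4 / 3) (5 / 3) x
  have hP : ∀ x ∈ Ioo (0 : ℝ) 1, HasDerivAt P (2 / 3 * betaIntegrand (2 / 3) (2 / 3) x) x :=
    fun x hx => by
      have h := hasDerivAt_rpow_mul_one_sub_rpow_mul_F21R (p := 2 / 3) (q := 2 / 3) (by norm_num)
        (by norm_num) hx
      rwa [show (2 : ℝ) / 3 + 2 / 3 = 4 / 3 by norm_num,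
        show (2 : ℝ) / 3 + 1 = 5 / 3 by norm_num] at h
  have hP0 : Tendsto P (𝓝[>] 0) (𝓝 0) := by
    refine (tendsto_rpow_mul_nhdsGT_zero (p := 2 / 3) (by norm_num) ?_).congr
      fun x => (mul_assoc _ _ _).symm
    exact ((continuousAt_const.sub continuousAt_id).rpow_const (Or.inr (by norm_num))).mul
      (continuousAt_F21R_zero one_pos le_rfl (by norm_num) (by norm_num))
  have hsum := add_apply_one_sub_eq_of_hasDerivAt (by norm_num) hP hP0 hz
  simp only [P, sub_sub_cancel] at hsum
  rw [show 2 * (2 / 3 : ℝ) = 4 / 3 by norm_num] at hsum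
  have hw :
      betaIntegrand (1 / 3) (1 / 3) z * (z ^ ((2 : ℝ) / 3) * (1 - z) ^ ((2 : ℝ) / 3)) = 1 := by
    rw [betaIntegrand, mul_mul_mul_comm, ← rpow_add hz.1, ← rpow_add (by linarith [hz.2])]
    norm_num
  linear_combination betaIntegrand (1 / 3) (1 / 3) z * hsum -
    (F21R 1 (4 / 3) (5 / 3) z + F21R 1 (4 / 3) (5 / 3) (1 - z)) * hw

lemma two_mul_Ph {z : ℝ} (hz : z ∈ Ioo (0 : ℝ) 1) :
    2 * Ph z = 1 + √3 / (2 * π) * (z * F32R 1 1 (4 / 3) 2 (5 / 3) z -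
      (1 - z) * F32R 1 1 (4 / 3) 2 (5 / 3) (1 - z)) := by
  set G := fun x : ℝ => x * F32R 1 1 (4 / 3) 2 (5 / 3) x
  set Φ := fun x => 1 + √3 / (2 * π) * (G x - G (1 - x)) - 2 * Ph x
  have hconst : √3 / (2 * π) * (2 / 3 * (Gamma (2 / 3) ^ 2 / Gamma (4 / 3))) =
      2 * (Gamma (2 / 3) / Gamma (1 / 3) ^ 2) := by
    have hΓ := Gamma_one_third_mul_Gamma_two_thirds
    have h13 := Gamma_pos_of_pos (by norm_num : (0 : ℝ) < 1 / 3)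
    rw [show (4 : ℝ) / 3 = 1 / 3 + 1 by norm_num, Gamma_add_one (by norm_num)]
    field_simp
    rw [mul_assoc, mul_comm (Gamma _), hΓ]
    field_simp
  have hΦ : ∀ x ∈ Ioo (0 : ℝ) 1, HasDerivAt Φ 0 x := by
    intro x hx
    have hG : ∀ y : ℝ, |y| < 1 → HasDerivAt G (F21R 1 (4 / 3) (5 / 3) y) y := fun y hy =>
      hasDerivAt_mul_F32R (by norm_num) (by norm_num) hy
    have hG1 := (hG (1 - x) (abs_lt.mpr ⟨by linarith [hx.2], by linarith [hx.1]⟩)).comp x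
      ((hasDerivAt_id' x).const_sub 1)
    have hG0 := hG x (abs_lt.mpr ⟨by linarith [hx.1], hx.2⟩)
    refine (((hG0.sub hG1).const_mul _).const_add 1).sub ((hasDerivAt_Ph hx).const_mul 2)
      |>.congr_deriv ?_
    linear_combination √3 / (2 * π) * F21R_add_F21R_one_sub hx +
      betaIntegrand (1 / 3) (1 / 3) x * hconst
  have hz' : 1 - z ∈ Ioo (0 : ℝ) 1 := ⟨by linarith [hz.2], by linarith [hz.1]⟩
  have hΦsymm : Φ z + Φ (1 - z) = 0 := by
    simp only [Φ, sub_sub_cancel]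
    linear_combination -2 * Ph_add_Ph_one_sub hz
  have hΦeq := eq_of_forall_hasDerivAt_zero isOpen_Ioo isPreconnected_Ioo hΦ hz hz'
  have hΦz : Φ z = 0 := by linarith
  simp only [Φ, G] at hΦz
  linarith

/-- `2𝔑_h(z) − 𝔓_h(z) − 𝔓_hv(z) = (√3/2π)·log(1/(1−z))` for `z ∈ (0,1)`. -/
theorem stmt1 (z : ℝ) (hz : z ∈ Set.Ioo (0:ℝ) 1) :
    2 * Nh z - Ph z - Phv z = Real.sqrt 3 / (2 * Real.pi) * Real.log (1 / (1 - z)) := by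
  rw [Nh, Phv, show 1 / (1 - z) = (1 - z)⁻¹ from one_div _, log_inv]
  linear_combination -two_mul_Ph hz
end

section
/- (A new quadratic transformation for ₃F₂.) Let a, b be complex numbers such that (a+b+1)/2 is not zero or a negative integer. Then there exists ε > 0 such that for every complex w with |w| < ε, ₃F₂(a, b, 1; 2, (a+b+1)/2; w) = (1−w) · ₃F₂((a+1)/2, (b+1)/2, 1; 2, (a+b+1)/2; 4w(1−w)). -/
open scoped BigOperators

/-- Rising factorial (Pochhammer symbol) `(x)_k = x(x+1)⋯(x+k-1)`. -/
noncomputable def pochC (x : ℂ) (k : ℕ) : ℂ := ∏ i ∈ Finset.range k, (x + i)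

/-- The generalized hypergeometric series `₃F₂(a₁,a₂,a₃;b₁,b₂;z)`. -/
noncomputable def F32 (a₁ a₂ a₃ b₁ b₂ z : ℂ) : ℂ :=
  ∑' k : ℕ, pochC a₁ k * pochC a₂ k * pochC a₃ k /
      (pochC b₁ k * pochC b₂ k * (Nat.factorial k : ℂ)) * z ^ k

/-!
Expanding `(1 - w) (4w(1 - w))ᵏ = 4ᵏ wᵏ (1 - w)ᵏ⁺¹` binomially and collecting powers of `w` turns the
right-hand side into `∑ Sₙ wⁿ` with finite sums `Sₙ`. A Wilf–Zeilberger certificate shows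
`(n + 2)(c + n) Sₙ₊₁ = (a + n)(b + n) Sₙ` for `c = (a + b + 1)/2`, which is the recurrence of the
coefficients on the left, and both sequences start at `1`. The double series converges absolutely
for `|w| < 1/8`, since the ratio of consecutive coefficients of the inner `₃F₂` tends to `4`; this
justifies the rearrangement.
-/

open Filter Topology Finset Nat

lemma pochC_succ (x : ℂ) (k : ℕ) : pochC x (k + 1) = pochC x k * (x + k) :=
  prod_range_succ _ _

lemma pochC_one (k : ℕ) : pochC 1 k = k ! := by
  induction k with
  | zero => simp [pochC]
  | succ k ih => rw [pochC_succ, ih, factorial_succ]; push_cast; ring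

lemma pochC_two (k : ℕ) : pochC 2 k = (k + 1)! := by
  induction k with
  | zero => simp [pochC]
  | succ k ih => rw [pochC_succ, ih, factorial_succ (k + 1)]; push_cast; ring

noncomputable def unitCoeff (x y z : ℂ) (n : ℕ) : ℂ :=
  pochC x n * pochC y n / ((n + 1)! * pochC z n)

lemma F32_one_two_eq_tsum (x y z t : ℂ) : F32 x y 1 2 z t = ∑' n, unitCoeff x y z n * t ^ n := by
  refine tsum_congr fun n => ?_
  rw [pochC_one, pochC_two, mul_div_mul_right _ _ (cast_ne_zero.mpr n.factorial_ne_zero),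
    unitCoeff]

lemma unitCoeff_zero (x y z : ℂ) : unitCoeff x y z 0 = 1 := by
  simp [unitCoeff, pochC]

lemma unitCoeff_succ (x y z : ℂ) (n : ℕ) :
    unitCoeff x y z (n + 1) =
      unitCoeff x y z n * ((x + n) * (y + n) / ((n + 2) * (z + n))) := by
  rw [unitCoeff, unitCoeff, ← mul_div_mul_comm, pochC_succ, pochC_succ, pochC_succ,
    factorial_succ]
  congr 1 <;> push_cast <;> ring

lemma add_two_mul_add_ne_zero {z : ℂ} (hz : ∀ n : ℕ, z ≠ -n) (k : ℕ) :
    ((k : ℂ) + 2) * (z + k) ≠ 0 :=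
  mul_ne_zero (by norm_cast) fun h => hz k (eq_neg_of_add_eq_zero_left h)

noncomputable def quadCoeff (a b : ℂ) (k : ℕ) : ℂ :=
  4 ^ k * unitCoeff ((a + 1) / 2) ((b + 1) / 2) ((a + b + 1) / 2) k

lemma quadCoeff_succ (a b : ℂ) (k : ℕ) :
    quadCoeff a b (k + 1) = quadCoeff a b k *
      ((a + 1 + 2 * k) * (b + 1 + 2 * k) / ((k + 2) * ((a + b + 1) / 2 + k))) := by
  rw [quadCoeff, quadCoeff, unitCoeff_succ]
  ring

lemma quadCoeff_succ_mul {a b : ℂ} (hc : ∀ n : ℕ, (a + b + 1) / 2 ≠ -n) (k : ℕ) :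
    quadCoeff a b (k + 1) * ((k + 2) * ((a + b + 1) / 2 + k)) =
      quadCoeff a b k * ((a + 1 + 2 * k) * (b + 1 + 2 * k)) := by
  rw [quadCoeff_succ, mul_assoc, div_mul_cancel₀ _ (add_two_mul_add_ne_zero hc k)]

section RowCoeff

variable {R : Type*} [CommRing R]

lemma Nat.cast_choose_succ_right_eq (m j : ℕ) :
    (m.choose (j + 1) : R) * (j + 1) = m.choose j * (m - j) := by
  rcases le_or_gt j m with h | h
  · have := congrArg (Nat.cast : ℕ → R) (choose_succ_right_eq m j)
    push_cast [h] at this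
    exact this
  · simp [choose_eq_zero_of_lt h, choose_eq_zero_of_lt (h.trans (lt_succ_self j))]

lemma Nat.cast_choose_mul_succ_eq (m j : ℕ) :
    (m.choose j : R) * (m + 1) = (m + 1).choose j * (m + 1 - j) := by
  rcases le_or_gt j (m + 1) with h | h
  · have := congrArg (Nat.cast : ℕ → R) (choose_mul_succ_eq m j)
    push_cast [h] at this
    exact this
  · simp [choose_eq_zero_of_lt h, choose_eq_zero_of_lt ((lt_succ_self m).trans h)]

def rowCoeff (s : R) (k n : ℕ) : R :=
  if k ≤ n then s ^ (n - k) * (k + 1).choose (n - k) else 0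

lemma rowCoeff_of_lt {s : R} {k n : ℕ} (h : n < k) : rowCoeff s k n = 0 :=
  if_neg (not_le.mpr h)

lemma rowCoeff_add_right (s : R) (k j : ℕ) : rowCoeff s k (k + j) = s ^ j * (k + 1).choose j := by
  simp [rowCoeff]

lemma rowCoeff_succ_right (s : R) (k n : ℕ) :
    ((n : R) + 1 - k) * rowCoeff s k (n + 1) = s * (2 * k + 1 - n) * rowCoeff s k n := by
  rcases le_or_gt k n with h | h
  · obtain ⟨j, rfl⟩ := exists_add_of_le h
    rw [add_assoc, rowCoeff_add_right, rowCoeff_add_right]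
    have := cast_choose_succ_right_eq (R := R) (k + 1) j
    push_cast at this ⊢
    linear_combination s ^ j * s * this
  · rcases (succ_le_of_lt h).eq_or_lt with rfl | h'
    · simp [rowCoeff_of_lt h]
    · simp [rowCoeff_of_lt h, rowCoeff_of_lt h']

lemma rowCoeff_succ_succ (s : R) (k n : ℕ) :
    (2 * (k : R) + 2 - n) * rowCoeff s (k + 1) (n + 1) = (k + 2) * rowCoeff s k n := by
  rcases le_or_gt k n with h | h
  · obtain ⟨j, rfl⟩ := exists_add_of_le h
    rw [add_right_comm, rowCoeff_add_right, rowCoeff_add_right]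
    have := cast_choose_mul_succ_eq (R := R) (k + 1) j
    push_cast at this ⊢
    linear_combination -s ^ j * this
  · rw [rowCoeff_of_lt h, rowCoeff_of_lt (succ_lt_succ h), mul_zero, mul_zero]

lemma sum_range_rowCoeff_mul_pow (s x : R) (k : ℕ) :
    ∑ n ∈ range (2 * k + 2), rowCoeff s k n * x ^ n = x ^ k * (1 + s * x) ^ (k + 1) := by
  rw [show 2 * k + 2 = k + (k + 2) by ring, sum_range_add,
    sum_eq_zero fun n hn => by rw [rowCoeff_of_lt (mem_range.mp hn), zero_mul], zero_add,
    add_comm 1, add_pow, mul_sum]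
  refine sum_congr rfl fun j _ => ?_
  rw [rowCoeff_add_right]
  ring

lemma hasSum_rowCoeff_mul_pow [TopologicalSpace R] (s x : R) (k : ℕ) :
    HasSum (fun n => rowCoeff s k n * x ^ n) (x ^ k * (1 + s * x) ^ (k + 1)) := by
  rw [← sum_range_rowCoeff_mul_pow]
  refine hasSum_sum_of_ne_finset_zero fun n hn => ?_
  obtain ⟨j, rfl⟩ := exists_add_of_le (not_lt.mp (mt mem_range.mpr hn))
  rw [show 2 * k + 2 + j = k + (k + 2 + j) by ring, rowCoeff_add_right,
    choose_eq_zero_of_lt (by omega)]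
  simp

end RowCoeff

lemma norm_rowCoeff_neg_one (k n : ℕ) : ‖rowCoeff (-1 : ℂ) k n‖ = rowCoeff (1 : ℝ) k n := by
  unfold rowCoeff
  split_ifs <;> simp

noncomputable def taylorCoeff (a b : ℂ) (n : ℕ) : ℂ :=
  ∑ k ∈ range (n + 1), quadCoeff a b k * rowCoeff (-1) k n

/-- Zeilberger's certificate for the recurrence satisfied by `taylorCoeff a b`. -/
noncomputable def wzCert (a b : ℂ) (n k : ℕ) : ℂ :=
  quadCoeff a b k *
    ((k * ((n : ℂ) - 2 * k) + ((a + b) * (n - 2 * k - 1) - (n - 1)) / 2) * rowCoeff (-1) k n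
      - (k + 1) * (a + b + 2 * k - 1) / 2 * rowCoeff (-1) k (n + 1))

lemma wzCert_zero (a b : ℂ) (n : ℕ) : wzCert a b n 0 = 0 := by
  refine mul_eq_zero_of_right _ ?_
  rcases n with _ | _ | n
  · simp [rowCoeff]
    ring
  · simp [rowCoeff]
  · simp [rowCoeff, choose_eq_zero_of_lt]

lemma wzCert_add_two (a b : ℂ) (n : ℕ) : wzCert a b n (n + 2) = 0 := by
  simp [wzCert, rowCoeff_of_lt]

lemma wzCert_sub {a b : ℂ} (hc : ∀ n : ℕ, (a + b + 1) / 2 ≠ -n) (n k : ℕ) :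
    ((n : ℂ) + 2) * ((a + b + 1) / 2 + n) * (quadCoeff a b k * rowCoeff (-1) k (n + 1))
      - (a + n) * (b + n) * (quadCoeff a b k * rowCoeff (-1) k n)
      = wzCert a b n (k + 1) - wzCert a b n k := by
  apply mul_left_cancel₀ (add_two_mul_add_ne_zero hc k)
  have r₁ := rowCoeff_succ_right (-1 : ℂ) k n
  have r₂ := rowCoeff_succ_right (-1 : ℂ) (k + 1) n
  have r₃ := rowCoeff_succ_succ (-1 : ℂ) k n
  have hq := quadCoeff_succ_mul hc k
  unfold wzCert
  push_cast at r₂ ⊢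
  set c := (a + b + 1) / 2
  set q := quadCoeff a b k
  set t₂ := rowCoeff (-1 : ℂ) (k + 1) n
  set t₃ := rowCoeff (-1 : ℂ) (k + 1) (n + 1)
  set α₀ := (k * ((n : ℂ) - 2 * k) + ((a + b) * (n - 2 * k - 1) - (n - 1)) / 2)
  set α₁ := ((k + 1) * ((n : ℂ) - 2 * (k + 1)) + ((a + b) * (n - 2 * (k + 1) - 1) - (n - 1)) / 2)
  set β₁ := ((k : ℂ) + 1 + 1) * (a + b + 2 * (k + 1) - 1) / 2
  -- `hq` trades `quadCoeff a b (k + 1)` for `quadCoeff a b k`; what is left over is a polynomial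
  -- combination of the contiguous relations `r₁`, `r₂`, `r₃` between the four values of `rowCoeff`.
  linear_combination
    q * ((k + 2) * (c + k) * (a + b + 2 * k + 2 * n + 3) / 2 * r₁
      + (a + 1 + 2 * k) * (b + 1 + 2 * k) * (a + b + 2 * k + 1) / 2 * r₂
      - (c + k) * (α₀ - (a + n) * (b + n) + (a + b + 2 * k + 2 * n + 3) * (n - 2 * k - 1) / 2) * r₃)
    - (α₁ * t₂ - β₁ * t₃) * hq

lemma taylorCoeff_succ_mul {a b : ℂ} (hc : ∀ n : ℕ, (a + b + 1) / 2 ≠ -n) (n : ℕ) :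
    ((n : ℂ) + 2) * ((a + b + 1) / 2 + n) * taylorCoeff a b (n + 1) =
      (a + n) * (b + n) * taylorCoeff a b n := by
  have h := sum_range_sub (wzCert a b n) (n + 2)
  rw [wzCert_add_two, wzCert_zero, ← sum_congr rfl fun k _ => wzCert_sub hc n k,
    sum_sub_distrib, ← mul_sum, ← mul_sum, sum_range_succ (fun k => _ * rowCoeff _ k n),
    rowCoeff_of_lt (lt_succ_self n), mul_zero, add_zero, sub_self] at h
  exact sub_eq_zero.mp h

lemma taylorCoeff_eq_unitCoeff {a b : ℂ} (hc : ∀ n : ℕ, (a + b + 1) / 2 ≠ -n) (n : ℕ) :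
    taylorCoeff a b n = unitCoeff a b ((a + b + 1) / 2) n := by
  induction n with
  | zero => simp [taylorCoeff, quadCoeff, unitCoeff_zero, rowCoeff]
  | succ n ih =>
    rw [unitCoeff_succ, ← ih, mul_div_assoc', eq_div_iff (add_two_mul_add_ne_zero hc n),
      mul_comm, taylorCoeff_succ_mul hc n, mul_comm]

lemma summable_norm_mul_pow_of_norm_succ_le {E : Type*} [SeminormedAddCommGroup E] {u : ℕ → E}
    {C q : ℝ} (hu : ∀ᶠ k in atTop, ‖u (k + 1)‖ ≤ C * ‖u k‖) (hq : 0 ≤ q) (hCq : C * q < 1) :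
    Summable fun k => ‖u k‖ * q ^ k := by
  refine summable_of_ratio_norm_eventually_le hCq ?_
  filter_upwards [hu] with k hk
  simp only [norm_mul, norm_norm, norm_pow, Real.norm_of_nonneg hq, pow_succ]
  calc ‖u (k + 1)‖ * (q ^ k * q) ≤ C * ‖u k‖ * (q ^ k * q) := by gcongr
    _ = C * q * (‖u k‖ * q ^ k) := by ring

lemma tendsto_quadCoeff_ratio (a b : ℂ) :
    Tendsto (fun k : ℕ => (a + 1 + 2 * k) * (b + 1 + 2 * k) / ((k + 2) * ((a + b + 1) / 2 + k)))
      atTop (𝓝 4) := by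
  have h₁ := tendsto_add_mul_div_add_mul_atTop_nhds (a + 1) 2 2 one_ne_zero
  have h₂ := tendsto_add_mul_div_add_mul_atTop_nhds (b + 1) ((a + b + 1) / 2) 2 one_ne_zero
  convert h₁.mul h₂ using 2 with k
  · rw [mul_div_mul_comm]
    ring_nf
  · norm_num

lemma eventually_norm_quadCoeff_succ_le (a b : ℂ) :
    ∀ᶠ k in atTop, ‖quadCoeff a b (k + 1)‖ ≤ 5 * ‖quadCoeff a b k‖ := by
  have h4 : ‖(4 : ℂ)‖ < 5 := by norm_num
  filter_upwards [(tendsto_quadCoeff_ratio a b).norm.eventually (gt_mem_nhds h4)] with k hk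
  rw [quadCoeff_succ, norm_mul, mul_comm]
  exact mul_le_mul_of_nonneg_right hk.le (norm_nonneg _)

lemma summable_quadCoeff_mul_rowCoeff (a b : ℂ) {w : ℂ} (hw : ‖w‖ < 1 / 8) :
    Summable fun p : ℕ × ℕ => quadCoeff a b p.1 * rowCoeff (-1) p.1 p.2 * w ^ p.2 := by
  have hrow (k : ℕ) : HasSum (fun n => ‖quadCoeff a b k * rowCoeff (-1) k n * w ^ n‖)
      ((1 + ‖w‖) * (‖quadCoeff a b k‖ * (‖w‖ * (1 + ‖w‖)) ^ k)) := by
    have e : (1 + ‖w‖) * (‖quadCoeff a b k‖ * (‖w‖ * (1 + ‖w‖)) ^ k) =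
        ‖quadCoeff a b k‖ * (‖w‖ ^ k * (1 + 1 * ‖w‖) ^ (k + 1)) := by
      rw [mul_pow, one_mul, pow_succ]
      ring
    rw [e]
    refine ((hasSum_rowCoeff_mul_pow (1 : ℝ) ‖w‖ k).mul_left _).congr_fun fun n => ?_
    simp only [norm_mul, norm_pow, norm_rowCoeff_neg_one, mul_assoc]
  refine Summable.of_norm <| (summable_prod_of_nonneg fun _ => norm_nonneg _).mpr
    ⟨fun k => (hrow k).summable, ?_⟩
  simp only [(hrow _).tsum_eq]
  refine (summable_norm_mul_pow_of_norm_succ_le (eventually_norm_quadCoeff_succ_le a b)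
    (by positivity) ?_).mul_left _
  nlinarith [norm_nonneg w]

/-- A new quadratic transformation for `₃F₂` (one unit upper parameter). -/
theorem stmt5 (a b : ℂ)
    (h : ∀ n : ℕ, (a + b + 1) / 2 ≠ -(n : ℂ)) :
    ∃ ε > 0, ∀ w : ℂ, ‖w‖ < ε →
      F32 a b 1 2 ((a + b + 1) / 2) w
        = (1 - w) *
          F32 ((a + 1) / 2) ((b + 1) / 2) 1 2 ((a + b + 1) / 2) (4 * w * (1 - w)) := by
  refine ⟨1 / 8, by norm_num, fun w hw => ?_⟩
  have hcol (n : ℕ) : ∑' k, quadCoeff a b k * rowCoeff (-1) k n * w ^ n =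
      unitCoeff a b ((a + b + 1) / 2) n * w ^ n := by
    rw [tsum_eq_sum (s := range (n + 1)) fun k hk => by
      rw [rowCoeff_of_lt (by simpa using hk), mul_zero, zero_mul], ← sum_mul,
      ← taylorCoeff_eq_unitCoeff h, taylorCoeff]
  have hrow (k : ℕ) : ∑' n, quadCoeff a b k * rowCoeff (-1) k n * w ^ n =
      (1 - w) * (unitCoeff ((a + 1) / 2) ((b + 1) / 2) ((a + b + 1) / 2) k
        * (4 * w * (1 - w)) ^ k) := by
    simp only [mul_assoc, tsum_mul_left, (hasSum_rowCoeff_mul_pow (-1 : ℂ) w k).tsum_eq,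
      quadCoeff, mul_pow]
    ring
  rw [F32_one_two_eq_tsum, F32_one_two_eq_tsum, ← tsum_mul_left, ← tsum_congr hcol, ← tsum_congr hrow]
  exact (summable_quadCoeff_mul_rowCoeff a b hw).tsum_comm
end

section
/- The functions F₁(x) = log x and F₂(x) = log(1−x) each satisfy Watts's fifth-order differential equation on (0,1): for every x ∈ (0,1) and for F = F₁ and F = F₂, the third derivative at x of the function y ↦ (y(1−y))^{4/3} · (d/dy)[ (y(1−y))^{2/3} · F′(y) ] equals 0. -/
/-!
Writing `u = x(1 - x)`, the product rule gives
`u^{4/3} (u^{2/3} g)' = (2/3) u u' g + u² g'`, so the fractional powers cancel. For `g = F'`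
with `F = log x` or `F = log (1 - x)`, this is the quadratic `(x² - 1)/3`, resp. `(x² - 2x)/3`,
whose third derivative vanishes.
-/

open Real Set

theorem iteratedDeriv_three_quadratic {𝕜 : Type*} [NontriviallyNormedField 𝕜] (a b c x : 𝕜) :
    iteratedDeriv 3 (fun y => a * y ^ 2 + b * y + c) x = 0 := by
  rw [iteratedDeriv_fun_add (by fun_prop) (by fun_prop),
    iteratedDeriv_fun_add (by fun_prop) (by fun_prop),
    iteratedDeriv_const_mul_field, iteratedDeriv_const_mul_field]
  simp [iteratedDeriv_const, iteratedDeriv_fun_id]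

theorem iteratedDeriv_three_eq_zero_of_eqOn_quadratic {𝕜 : Type*} [NontriviallyNormedField 𝕜]
    {f : 𝕜 → 𝕜} {s : Set 𝕜} {a b c x : 𝕜} (hs : IsOpen s)
    (hf : EqOn f (fun y => a * y ^ 2 + b * y + c) s) (hx : x ∈ s) :
    iteratedDeriv 3 f x = 0 := by
  rw [hf.iteratedDeriv_of_isOpen hs 3 hx, iteratedDeriv_three_quadratic]

theorem rpow_mul_deriv_rpow_mul {u g : ℝ → ℝ} {u' g' y : ℝ} (p q : ℝ)
    (hu : HasDerivAt u u' y) (hg : HasDerivAt g g' y) (hy : 0 < u y) :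
    u y ^ p * deriv (fun t => u t ^ q * g t) y
      = q * u y ^ (p + q - 1) * u' * g y + u y ^ (p + q) * g' := by
  rw [((hu.rpow_const (Or.inl hy.ne')).fun_mul hg).deriv, add_sub_assoc, rpow_add hy, rpow_add hy]
  ring

theorem rpow_four_thirds_mul_deriv_rpow_two_thirds_mul {g : ℝ → ℝ} {g' y : ℝ}
    (hy : y ∈ Ioo (0 : ℝ) 1) (hg : HasDerivAt g g' y) :
    (y * (1 - y)) ^ ((4 : ℝ) / 3) * deriv (fun t => (t * (1 - t)) ^ ((2 : ℝ) / 3) * g t) y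
      = 2 / 3 * (y * (1 - y)) * (1 - 2 * y) * g y + (y * (1 - y)) ^ 2 * g' := by
  have hu : HasDerivAt (fun t => t * (1 - t)) (1 - 2 * y) y :=
    ((hasDerivAt_id' y).fun_mul ((hasDerivAt_id' y).const_sub 1)).congr_deriv (by ring)
  rw [rpow_mul_deriv_rpow_mul (u := fun t => t * (1 - t)) _ _ hu hg
    (mul_pos hy.1 (sub_pos.2 hy.2))]
  norm_num

/-- `log x` and `log(1−x)` each satisfy Watts's fifth-order differential
equation on `(0,1)`. -/
theorem stmt9 (x : ℝ) (hx : x ∈ Set.Ioo (0:ℝ) 1) :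
    iteratedDeriv 3
      (fun y => (y * (1 - y)) ^ ((4:ℝ)/3) *
        deriv (fun t => (t * (1 - t)) ^ ((2:ℝ)/3) *
          deriv (fun s => Real.log s) t) y) x = 0 ∧
    iteratedDeriv 3
      (fun y => (y * (1 - y)) ^ ((4:ℝ)/3) *
        deriv (fun t => (t * (1 - t)) ^ ((2:ℝ)/3) *
          deriv (fun s => Real.log (1 - s)) t) y) x = 0 := by
  have hlog : deriv (fun s => Real.log (1 - s)) = fun t => -(1 - t)⁻¹ := by
    funext t
    rw [deriv_comp_const_sub, Real.deriv_log]
  constructor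
  · refine iteratedDeriv_three_eq_zero_of_eqOn_quadratic (a := 1 / 3) (b := 0) (c := -1 / 3)
      isOpen_Ioo (fun y hy => ?_) hx
    simp only [Real.deriv_log']
    have hy0 : y ≠ 0 := hy.1.ne'
    rw [rpow_four_thirds_mul_deriv_rpow_two_thirds_mul hy (hasDerivAt_inv hy0)]
    field_simp
    ring
  · refine iteratedDeriv_three_eq_zero_of_eqOn_quadratic (a := 1 / 3) (b := -2 / 3) (c := 0)
      isOpen_Ioo (fun y hy => ?_) hx
    have h1y : 1 - y ≠ 0 := (sub_pos.2 hy.2).ne'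
    simp only [hlog]
    rw [rpow_four_thirds_mul_deriv_rpow_two_thirds_mul hy
      (((hasDerivAt_id' y).const_sub 1).fun_inv h1y).fun_neg]
    field_simp
    ring
end

section
/- Every solution of the third-order equation is a solution of Watts's fifth-order equation: if F : ℝ → ℝ is infinitely differentiable on (0,1) and for every x ∈ (0,1) the derivative at x of y ↦ (y(1−y))^{1/3} · (d/dy)[ (y(1−y))^{2/3} · F′(y) ] equals 0, then for every x ∈ (0,1) the third derivative at x of y ↦ (y(1−y))^{4/3} · (d/dy)[ (y(1−y))^{2/3} · F′(y) ] equals 0. -/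
open Set

/-- Every solution of the third-order equation on `(0,1)` is a solution of
Watts's fifth-order equation. -/
theorem stmt10 (F : ℝ → ℝ) (hF : ContDiffOn ℝ (⊤ : ℕ∞) F (Set.Ioo (0:ℝ) 1))
    (h3 : ∀ x ∈ Set.Ioo (0:ℝ) 1,
      deriv
        (fun y => (y * (1 - y)) ^ ((1:ℝ)/3) *
          deriv (fun t => (t * (1 - t)) ^ ((2:ℝ)/3) * deriv F t) y) x = 0) :
    ∀ x ∈ Set.Ioo (0:ℝ) 1,
      iteratedDeriv 3
        (fun y => (y * (1 - y)) ^ ((4:ℝ)/3) *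
          deriv (fun t => (t * (1 - t)) ^ ((2:ℝ)/3) * deriv F t) y) x = 0 := by
  intro x hx
  set G : ℝ → ℝ := deriv (fun t => (t * (1 - t)) ^ ((2:ℝ)/3) * deriv F t) with hGdef
  have hPpos : ∀ y ∈ Ioo (0:ℝ) 1, 0 < y * (1 - y) := fun y hy =>
    mul_pos hy.1 (by linarith [hy.2])
  have hPcd : ContDiff ℝ (⊤ : ℕ∞) (fun y : ℝ => y * (1 - y)) :=
    contDiff_id.mul (contDiff_const.sub contDiff_id)
  have htop : ((⊤:ℕ∞) : WithTop ℕ∞) + 1 ≤ ((⊤:ℕ∞) : WithTop ℕ∞) := by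
    simp
  have hrpow : ∀ p : ℝ, ContDiffOn ℝ ((⊤:ℕ∞) : WithTop ℕ∞)
      (fun t : ℝ => (t * (1 - t)) ^ p) (Ioo (0:ℝ) 1) := by
    intro p y hy
    exact (hPcd.contDiffAt.rpow_const_of_ne (p := p)
      (ne_of_gt (hPpos y hy))).contDiffWithinAt
  have hF' : ContDiffOn ℝ ((⊤:ℕ∞) : WithTop ℕ∞) (deriv F) (Ioo (0:ℝ) 1) :=
    (hF.of_le (by simp)).deriv_of_isOpen isOpen_Ioo htop
  have hg : ContDiffOn ℝ ((⊤:ℕ∞) : WithTop ℕ∞)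
      (fun t : ℝ => (t * (1 - t)) ^ ((2:ℝ)/3) * deriv F t)
      (Ioo (0:ℝ) 1) := (hrpow _).mul hF'
  have hG : ContDiffOn ℝ ((⊤:ℕ∞) : WithTop ℕ∞) G (Ioo (0:ℝ) 1) :=
    hg.deriv_of_isOpen isOpen_Ioo htop
  have hh : ContDiffOn ℝ ((⊤:ℕ∞) : WithTop ℕ∞)
      (fun y : ℝ => (y * (1 - y)) ^ ((1:ℝ)/3) * G y) (Ioo (0:ℝ) 1) :=
    (hrpow _).mul hG
  have hhdiff : DifferentiableOn ℝ (fun y : ℝ => (y * (1 - y)) ^ ((1:ℝ)/3) * G y)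
      (Ioo (0:ℝ) 1) := hh.differentiableOn (by simp)
  set c : ℝ := ((1:ℝ)/2 * (1 - 1/2)) ^ ((1:ℝ)/3) * G (1/2) with hcdef
  have hhalf : (1/2 : ℝ) ∈ Ioo (0:ℝ) 1 := by norm_num
  have hconst : ∀ y ∈ Ioo (0:ℝ) 1, (y * (1 - y)) ^ ((1:ℝ)/3) * G y = c := by
    intro y hy
    refine (convex_Ioo (0:ℝ) 1).is_const_of_fderivWithin_eq_zero hhdiff ?_ hy hhalf
    intro z hz
    have hdz : DifferentiableAt ℝ (fun y : ℝ => (y * (1 - y)) ^ ((1:ℝ)/3) * G y) z :=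
      hhdiff.differentiableAt (isOpen_Ioo.mem_nhds hz)
    have h0 : HasDerivAt (fun y : ℝ => (y * (1 - y)) ^ ((1:ℝ)/3) * G y) 0 z := by
      have := hdz.hasDerivAt
      rwa [h3 z hz] at this
    rw [fderivWithin_of_isOpen isOpen_Ioo hz, h0.hasFDerivAt.fderiv]
    ext
    simp
  have heq : (fun y : ℝ => (y * (1 - y)) ^ ((4:ℝ)/3) * G y)
      =ᶠ[nhds x] fun y => c * (y * (1 - y)) := by
    filter_upwards [isOpen_Ioo.mem_nhds hx] with y hy
    have hp := hPpos y hy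
    have h43 : (y * (1 - y)) ^ ((4:ℝ)/3)
        = (y * (1 - y)) * (y * (1 - y)) ^ ((1:ℝ)/3) := by
      rw [show (4:ℝ)/3 = 1 + 1/3 by norm_num, Real.rpow_add hp, Real.rpow_one]
    rw [h43, mul_assoc, hconst y hy, mul_comm]
  rw [Filter.EventuallyEq.iteratedDeriv_eq 3 heq]
  have e1 : deriv (fun y : ℝ => c * (y * (1 - y))) = fun y => c * (1 - 2 * y) := by
    funext z
    have h1 : HasDerivAt (fun y : ℝ => y * (1 - y)) (1 - 2 * z) z := by
      have := (hasDerivAt_id z).mul ((hasDerivAt_const z (1:ℝ)).sub (hasDerivAt_id z))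
      refine this.congr_deriv ?_
      simp only [id_eq, Pi.sub_apply]
      ring
    exact (h1.const_mul c).deriv
  have e2 : deriv (fun y : ℝ => c * (1 - 2 * y)) = fun _ => -(2 * c) := by
    funext z
    have h1 : HasDerivAt (fun y : ℝ => 1 - 2 * y) (-2) z := by
      have := (hasDerivAt_const z (1:ℝ)).sub ((hasDerivAt_id z).const_mul (2:ℝ))
      refine this.congr_deriv ?_
      ring
    have := h1.const_mul c
    rw [this.deriv]
    ring
  simp only [iteratedDeriv_succ, iteratedDeriv_zero, e1, e2]
  simp
end

section
/- 𝔓_h(1/2) = 1/2; that is, (3Γ(2/3)/Γ(1/3)²) · 2^{−1/3} · ₂F₁(1/3,2/3;4/3;1/2) = 1/2. -/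
open scoped BigOperators

/-!
Since `(1/3)_k / (4/3)_k = 1 / (3k + 1)`, the series `z ^ (1/3) · ₂F₁(1/3, 2/3; 4/3; z)` is `1/3`
times the termwise integral over `[0, z]` of the binomial series of `t^(-2/3) (1 - t)^(-2/3)`,
i.e. an incomplete Beta integral. At `z = 1/2` the symmetry `t ↦ 1 - t` makes it half of
`B(1/3, 1/3) = Γ(1/3)² / Γ(2/3)`, which is exactly cancelled by the prefactor of `𝔓_h`.
-/

open MeasureTheory intervalIntegral

lemma pochR_eq_ascPochhammer_eval (x : ℝ) (n : ℕ) : pochR x n = (ascPochhammer ℝ n).eval x := by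
  induction n with
  | zero => simp [pochR]
  | succ n ih => rw [pochR, Finset.prod_range_succ, ← pochR, ih, ascPochhammer_succ_eval]

lemma pochR_nonneg {x : ℝ} (hx : 0 ≤ x) (k : ℕ) : 0 ≤ pochR x k :=
  Finset.prod_nonneg fun i _ => by positivity

lemma pochR_mul_add (x : ℝ) (k : ℕ) : pochR x k * (x + k) = x * pochR (x + 1) k := by
  rw [pochR, ← Finset.prod_range_succ, Finset.prod_range_succ', pochR, mul_comm]
  push_cast
  rw [add_zero]
  exact congrArg (x * ·) (Finset.prod_congr rfl fun i _ => by ring)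

lemma ring_choose_add_sub_one_eq_pochR_div (a : ℝ) (n : ℕ) :
    Ring.choose (a + n - 1) n = pochR a n / n.factorial := by
  rw [Ring.choose_eq_smul, Polynomial.descPochhammer_smeval_eq_ascPochhammer,
    Polynomial.ascPochhammer_smeval_eq_eval,
    show a + n - 1 - n + 1 = a by ring, pochR_eq_ascPochhammer_eval, smul_eq_mul, div_eq_inv_mul]

theorem hasSum_pochR_div_factorial_mul_pow (a : ℝ) {x : ℝ} (hx : |x| < 1) :
    HasSum (fun n => pochR a n / n.factorial * x ^ n) ((1 - x) ^ (-a)) := by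
  have h := (Real.one_div_one_sub_rpow_hasFPowerSeriesOnBall_zero a).hasSum
    (y := x) (by simpa [enorm_eq_nnnorm, ← NNReal.coe_lt_coe] using hx)
  simp only [FormalMultilinearSeries.ofScalars_apply_eq, zero_add, smul_eq_mul,
    ring_choose_add_sub_one_eq_pochR_div] at h
  rwa [Real.rpow_neg (by linarith [abs_lt.mp hx]), ← one_div]

theorem hasSum_pochR_div_factorial_mul_rpow {a b t : ℝ} (ht0 : 0 < t) (ht1 : t < 1) :
    HasSum (fun k : ℕ => pochR a k / k.factorial * t ^ ((k : ℝ) + b - 1))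
      (t ^ (b - 1) * (1 - t) ^ (-a)) := by
  refine ((hasSum_pochR_div_factorial_mul_pow a (x := t) (by rwa [abs_of_pos ht0])).mul_left
    (t ^ (b - 1))).congr_fun fun k => ?_
  rw [show (k : ℝ) + b - 1 = k + (b - 1) by ring, Real.rpow_add ht0, Real.rpow_natCast]
  ring

lemma integral_rpow_natCast_add {b r : ℝ} (hb : 0 < b) (k : ℕ) :
    ∫ t in (0 : ℝ)..r, t ^ ((k : ℝ) + b - 1) = r ^ ((k : ℝ) + b) / (k + b) := by
  have hkb : 0 < (k : ℝ) + b := by positivity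
  rw [integral_rpow (Or.inl (by linarith)), sub_add_cancel, Real.zero_rpow hkb.ne', sub_zero]

theorem hasSum_integral_rpow_mul_one_sub_rpow_neg {a b r : ℝ} (ha : 0 ≤ a) (hb : 0 < b)
    (hr0 : 0 ≤ r) (hr1 : r < 1) :
    HasSum (fun k : ℕ => pochR a k / k.factorial * (r ^ ((k : ℝ) + b) / (k + b)))
      (∫ t in (0 : ℝ)..r, t ^ (b - 1) * (1 - t) ^ (-a)) := by
  set c : ℕ → ℝ := fun k => pochR a k / k.factorial
  have hc : ∀ k, 0 ≤ c k := fun k => div_nonneg (pochR_nonneg ha k) (Nat.cast_nonneg _)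
  set f : ℕ → ℝ → ℝ := fun k t => c k * t ^ ((k : ℝ) + b - 1)
  have hint : ∀ k, IntegrableOn (f k) (Set.Ioc 0 r) := fun k =>
    (intervalIntegrable_iff_integrableOn_Ioc_of_le hr0).mp
      ((intervalIntegrable_rpow' (by have := k.cast_nonneg (α := ℝ); linarith)).const_mul _)
  have hint_f : ∀ k, ∫ t in Set.Ioc 0 r, f k t = c k * (r ^ ((k : ℝ) + b) / (k + b)) := by
    intro k
    rw [← integral_of_le hr0, intervalIntegral.integral_const_mul, integral_rpow_natCast_add hb]
  have hnorm : ∀ k, ∫ t in Set.Ioc 0 r, ‖f k t‖ = ∫ t in Set.Ioc 0 r, f k t := fun k =>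
    setIntegral_congr_fun measurableSet_Ioc fun t ht =>
      Real.norm_of_nonneg (mul_nonneg (hc k) (Real.rpow_nonneg ht.1.le _))
  have hsummable : Summable fun k => c k * (r ^ ((k : ℝ) + b) / (k + b)) := by
    refine Summable.of_nonneg_of_le
      (fun k => mul_nonneg (hc k) (by positivity)) (fun k => ?_)
      (((hasSum_pochR_div_factorial_mul_pow a (x := r) (by rw [abs_of_nonneg hr0]; exact hr1)
        ).summable).mul_left (r ^ b / b))
    have hkb : b ≤ (k : ℝ) + b := by linarith [k.cast_nonneg (α := ℝ)]
    rw [Real.rpow_add' hr0 (by positivity), Real.rpow_natCast]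
    calc c k * (r ^ k * r ^ b / (k + b)) ≤ c k * (r ^ k * r ^ b / b) := by
          gcongr
          exact hc k
      _ = r ^ b / b * (c k * r ^ k) := by ring
  have hpointwise : ∀ t ∈ Set.Ioc 0 r, t ^ (b - 1) * (1 - t) ^ (-a) = ∑' k, f k t :=
    fun t ht => (hasSum_pochR_div_factorial_mul_rpow ht.1 (by linarith [ht.2])).tsum_eq.symm
  rw [hsummable.hasSum_iff, integral_of_le hr0, setIntegral_congr_fun measurableSet_Ioc hpointwise,
    ← integral_tsum_of_summable_integral_norm hint
      (by simpa only [hnorm, hint_f] using hsummable)]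
  exact tsum_congr fun k => (hint_f k).symm

theorem F21R_add_one_eq_integral {a b r : ℝ} (ha : 0 ≤ a) (hb : 0 < b) (hr0 : 0 < r) (hr1 : r < 1) :
    F21R b a (b + 1) r = b * r ^ (-b) * ∫ t in (0 : ℝ)..r, t ^ (b - 1) * (1 - t) ^ (-a) := by
  rw [← (hasSum_integral_rpow_mul_one_sub_rpow_neg ha hb hr0.le hr1).tsum_eq, ← tsum_mul_left,
    F21R]
  refine tsum_congr fun k => ?_
  have hkb : 0 < (k : ℝ) + b := by positivity
  have hpoch := pochR_mul_add b k
  have hb1 : 0 < pochR (b + 1) k := Finset.prod_pos fun i _ => by positivity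
  rw [Real.rpow_add hr0, Real.rpow_natCast, Real.rpow_neg hr0.le]
  have hrb : 0 < r ^ b := Real.rpow_pos_of_pos hr0 b
  field_simp
  linear_combination pochR a k * hpoch

lemma cpow_mul_one_sub_cpow_ofReal {t : ℝ} (ht : t ∈ Set.Icc (0 : ℝ) 1) (a b : ℝ) :
    (t : ℂ) ^ ((a : ℂ) - 1) * (1 - (t : ℂ)) ^ ((b : ℂ) - 1) =
      ((t ^ (a - 1) * (1 - t) ^ (b - 1) : ℝ) : ℂ) := by
  push_cast [Complex.ofReal_cpow ht.1, Complex.ofReal_cpow (sub_nonneg.mpr ht.2)]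
  rfl

lemma intervalIntegrable_rpow_mul_one_sub_rpow {a b : ℝ} (ha : 0 < a) (hb : 0 < b) :
    IntervalIntegrable (fun t : ℝ => t ^ (a - 1) * (1 - t) ^ (b - 1)) volume 0 1 := by
  have h := Complex.betaIntegral_convergent (u := a) (v := b) (by simpa) (by simpa)
  refine intervalIntegrable_iff.mpr
    (IntegrableOn.congr_fun (intervalIntegrable_iff.mp h).re (fun t ht => ?_) measurableSet_uIoc)
  rw [Set.uIoc_of_le zero_le_one] at ht
  rw [RCLike.re_to_complex, cpow_mul_one_sub_cpow_ofReal (Set.Ioc_subset_Icc_self ht),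
    Complex.ofReal_re]

lemma integral_rpow_mul_one_sub_rpow {a b : ℝ} (ha : 0 < a) (hb : 0 < b) :
    ∫ t in (0 : ℝ)..1, t ^ (a - 1) * (1 - t) ^ (b - 1) =
      Real.Gamma a * Real.Gamma b / Real.Gamma (a + b) := by
  have h := Complex.Gamma_mul_Gamma_eq_betaIntegral (s := a) (t := b) (by simpa) (by simpa)
  have hbeta : Complex.betaIntegral a b =
      ((∫ t in (0 : ℝ)..1, t ^ (a - 1) * (1 - t) ^ (b - 1) : ℝ) : ℂ) := by
    rw [Complex.betaIntegral, ← integral_ofReal]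
    refine integral_congr fun t ht => ?_
    rw [Set.uIcc_of_le zero_le_one] at ht
    exact cpow_mul_one_sub_cpow_ofReal ht a b
  rw [hbeta, ← Complex.ofReal_add, Complex.Gamma_ofReal, Complex.Gamma_ofReal,
    Complex.Gamma_ofReal] at h
  have hGamma : Real.Gamma (a + b) ≠ 0 := (Real.Gamma_pos_of_pos (by positivity)).ne'
  rw [eq_div_iff hGamma, mul_comm]
  exact_mod_cast h.symm

lemma integral_zero_half_eq_half_of_symm {f : ℝ → ℝ} (hf : IntervalIntegrable f volume 0 1)
    (hsymm : ∀ t, f (1 - t) = f t) : ∫ t in (0 : ℝ)..1/2, f t = (∫ t in (0 : ℝ)..1, f t) / 2 := by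
  have hsplit := integral_add_adjacent_intervals (a := 0) (b := 1/2) (c := 1)
    (hf.mono_set (by rw [Set.uIcc_of_le, Set.uIcc_of_le] <;> norm_num [Set.Icc_subset_Icc]))
    (hf.mono_set (by rw [Set.uIcc_of_le, Set.uIcc_of_le] <;> norm_num [Set.Icc_subset_Icc]))
  have hreflect := integral_comp_sub_left f (a := 0) (b := 1/2) 1
  norm_num [hsymm] at hreflect hsplit ⊢
  linarith

/-- `𝔓_h(1/2) = 1/2`. -/
theorem stmt11 : Ph (1/2) = 1/2 := by
  have hF := F21R_add_one_eq_integral (a := 2/3) (b := 1/3) (r := 1/2)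
    (by norm_num) (by norm_num) (by norm_num) (by norm_num)
  have hI := integral_zero_half_eq_half_of_symm
    (intervalIntegrable_rpow_mul_one_sub_rpow (a := 1/3) (b := 1/3) (by norm_num) (by norm_num))
    (fun t => by rw [sub_sub_cancel, mul_comm])
  rw [integral_rpow_mul_one_sub_rpow (by norm_num) (by norm_num)] at hI
  norm_num at hF hI
  have hG13 : 0 < Real.Gamma (1/3) := Real.Gamma_pos_of_pos (by norm_num)
  have hG23 : 0 < Real.Gamma (2/3) := Real.Gamma_pos_of_pos (by norm_num)
  have hroot : 0 < (1/2 : ℝ) ^ (1/3 : ℝ) := by positivity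
  rw [Ph, hF, hI, Real.rpow_neg (by norm_num)]
  field_simp
end
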